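/- arXiv:0904.2078 — 2 statements merged into one kernel-verified Lean document; each statement's English description precedes it below -/
import Mathlib

section
/- Fix p₀ ∈ Q and μ > 0. There exists a nonzero continuous function ψ ∈ C(𝕋³) satisfying ψ(q) = (μφ(q)/2)·∫_{𝕋³} φ(s)ψ(s)/ε(s) ds for all q ∈ 𝕋³ and ψ(q_i) ≠ 0 for i = 1,…,𝐧 (i.e. the operator h_μ(p₀) has a zero energy resonance) if and only if μ = μ₀. -/
open MeasureTheory Real Filter

noncomputable section

instance : Fact (0 < 2 * Real.pi) := ⟨by positivity⟩

/-- the circle `ℝ/2πℤ`. -/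
abbrev 𝕋 : Type := AddCircle (2 * Real.pi)

/-- the three-dimensional torus `𝕋³ = (ℝ/2πℤ)³`, carrying the product of the Haar
(Lebesgue) measures of total mass `2π`; its total mass is `(2π)³`. -/
abbrev T3 : Type := Fin 3 → 𝕋

/-- the cosine function, lifted to the circle of circumference `2π`. -/
def ccos : 𝕋 → ℝ := Real.cos_periodic.lift

/-- the dispersion function `ε(p) = ∑_{j=1}^3 (1 - cos (m p⁽ʲ⁾))`. -/
def eps (m : ℕ) (p : T3) : ℝ := ∑ j : Fin 3, (1 - ccos (m • p j))

/-- the function `w(p,q) = ε(p) + ε(p+q) + ε(q)`. -/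
def w (m : ℕ) (p q : T3) : ℝ := eps m p + eps m (p + q) + eps m q

/-- the representative of a point of `𝕋` in `[-π, π)`. -/
def rep (x : 𝕋) : ℝ := ((AddCircle.equivIco (2 * Real.pi) (-Real.pi)) x : ℝ)

/-- Euclidean norm of the representative (in `[-π,π)³`) of a point of the torus. -/
def tnorm (p : T3) : ℝ := Real.sqrt (∑ j : Fin 3, rep (p j) ^ 2)

/-- Euclidean inner product of the representatives of two points of the torus. -/
def tinner (p q : T3) : ℝ := ∑ j : Fin 3, rep (p j) * rep (q j)

/-- a function on the torus is real-analytic if it lifts to an analytic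
(automatically `2π`-periodic) function on `ℝ³`. -/
def TorusAnalytic (φ : T3 → ℝ) : Prop :=
  ∃ Φ : (Fin 3 → ℝ) → ℝ, (∀ x, AnalyticAt ℝ Φ x) ∧
    ∀ x : Fin 3 → ℝ, Φ x = φ (fun j => (x j : 𝕋))

/-- evenness of a function on the torus. -/
def TorusEven (φ : T3 → ℝ) : Prop := ∀ p : T3, φ (-p) = φ p

/-- the Fredholm determinant `Δ_μ(p; z) = 1 - μ ∫_{𝕋³} φ(q)²/(w(p,q) - z) dq`. -/
def Delta (m : ℕ) (φ : T3 → ℝ) (μ : ℝ) (p : T3) (z : ℝ) : ℝ :=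
  1 - μ * ∫ q : T3, φ q ^ 2 / (w m p q - z)

/-!
Every solution `ψ` of the resonance equation is the multiple `c φ` of `φ`, where
`c = (μ/2) ∫ φψ/ε`. Substituting `ψ = c φ` back gives `c = c · (μ/2) ∫ φ²/ε`, and `c ≠ 0`
because `ψ ≠ 0`; hence `μ ∫ φ²/ε = 2`. Conversely, for `μ = μ₀` the function `φ` itself
solves the equation, and it is continuous and nonzero wherever `φ` is.
-/

theorem TorusAnalytic.continuous {φ : T3 → ℝ} (h : TorusAnalytic φ) : Continuous φ := by
  obtain ⟨Φ, hΦ, hlift⟩ := h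
  have hquot : Topology.IsQuotientMap (Pi.map fun _ : Fin 3 => ((↑) : ℝ → 𝕋)) :=
    (IsOpenQuotientMap.piMap fun _ => QuotientAddGroup.isOpenQuotientMap_mk).isQuotientMap
  have hcomp : φ ∘ Pi.map (fun _ : Fin 3 => ((↑) : ℝ → 𝕋)) = Φ := funext fun x => (hlift x).symm
  rw [hquot.continuous_iff, hcomp]
  exact continuous_iff_continuousAt.2 fun x => (hΦ x).continuousAt

section ResonanceEquation

variable {α : Type*} [MeasurableSpace α] (ν : Measure α) (φ ε : α → ℝ) (μ : ℝ)

def IsResonanceSolution (ψ : α → ℝ) : Prop :=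
  ∀ q, ψ q = μ * φ q / 2 * ∫ s, φ s * ψ s / ε s ∂ν

variable {ν φ ε μ}

theorem IsResonanceSolution.mul_integral_eq_two {ψ : α → ℝ}
    (hsol : IsResonanceSolution ν φ ε μ ψ) (hψ : ψ ≠ 0) :
    μ * ∫ s, φ s ^ 2 / ε s ∂ν = 2 := by
  unfold IsResonanceSolution at hsol
  set c := ∫ s, φ s * ψ s / ε s ∂ν
  have hc : c ≠ 0 := fun hc => hψ <| funext fun q => by
    rw [hsol q, hc, mul_zero, Pi.zero_apply]
  have hmul : ∀ q, ψ q = μ * c / 2 * φ q := fun q => by rw [hsol q]; ring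
  have hself : c = μ * c / 2 * ∫ s, φ s ^ 2 / ε s ∂ν := by
    rw [← integral_const_mul]
    exact integral_congr_ae <| .of_forall fun s => by
      simp only [hmul s]; ring
  have hfactor : c * (μ * (∫ s, φ s ^ 2 / ε s ∂ν) - 2) = 0 := by linear_combination -2 * hself
  linarith [(mul_eq_zero.1 hfactor).resolve_left hc]

theorem isResonanceSolution_self (h : μ * ∫ s, φ s ^ 2 / ε s ∂ν = 2) :
    IsResonanceSolution ν φ ε μ φ := by
  intro q
  have hsq : ∫ s, φ s * φ s / ε s ∂ν = ∫ s, φ s ^ 2 / ε s ∂ν := by simp only [← sq]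
  rw [hsq]
  linear_combination (-φ q / 2) * h

end ResonanceEquation

theorem zero_energy_resonance_iff_general (m : ℕ)
    (φ : T3 → ℝ) (hφa : TorusAnalytic φ)
    (hpos : 0 < ∫ s : T3, φ s ^ 2 / eps m s)
    (μ : ℝ) :
    (∃ ψ : T3 → ℝ, Continuous ψ ∧ ψ ≠ 0 ∧
      (∀ q : T3, ψ q = μ * φ q / 2 * ∫ s : T3, φ s * ψ s / eps m s) ∧
      (∀ q : T3, eps m q = 0 → φ q ≠ 0 → ψ q ≠ 0)) ↔
    μ = 2 * (∫ s : T3, φ s ^ 2 / eps m s)⁻¹ := by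
  rw [eq_mul_inv_iff_mul_eq₀ hpos.ne']
  constructor
  · rintro ⟨ψ, -, hψ, hsol, -⟩
    exact IsResonanceSolution.mul_integral_eq_two hsol hψ
  · intro h
    refine ⟨φ, hφa.continuous, ?_, isResonanceSolution_self h, fun _ _ hq => hq⟩
    rintro rfl
    simp at hpos

/-- The Friedrichs model `h_μ(p₀)`, `p₀ ∈ Q`, has a zero energy resonance (a nonzero
continuous solution `ψ` of `ψ(q) = (μφ(q)/2)∫ φ(s)ψ(s)/ε(s) ds` which is nonzero at every
point of `Q` where `φ` is nonzero) if and only if `μ = μ₀ = 2(∫ φ(s)²/ε(s) ds)⁻¹`. -/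
theorem zero_energy_resonance_iff (m : ℕ) (hm : 3 ≤ m)
    (φ : T3 → ℝ) (hφa : TorusAnalytic φ) (hφe : TorusEven φ)
    (hn : 2 ≤ Set.ncard {q : T3 | eps m q = 0 ∧ φ q ≠ 0})
    (hint : Integrable (fun s : T3 => φ s ^ 2 / eps m s) volume)
    (hpos : 0 < ∫ s : T3, φ s ^ 2 / eps m s)
    (p₀ : T3) (hp₀ : eps m p₀ = 0) (μ : ℝ) (hμ : 0 < μ) :
    (∃ ψ : T3 → ℝ, Continuous ψ ∧ ψ ≠ 0 ∧
      (∀ q : T3, ψ q = μ * φ q / 2 * ∫ s : T3, φ s * ψ s / eps m s) ∧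
      (∀ q : T3, eps m q = 0 → φ q ≠ 0 → ψ q ≠ 0)) ↔
    μ = 2 * (∫ s : T3, φ s ^ 2 / eps m s)⁻¹ :=
  zero_energy_resonance_iff_general m φ hφa hpos μ
end
end

section
/- For every p ∈ 𝕋³ and every z < 0 one has Δ_{μ₀}(p;z) > 0; consequently, for every p ∈ 𝕋³ the operator h_{μ₀}(p) has no negative eigenvalues, i.e. there is no z < 0 and nonzero f ∈ L²(𝕋³) with h_{μ₀}(p)f = z·f. -/
open MeasureTheory Real Filter

noncomputable section

/-! Put `ζ = -z > 0`. Since `φ` is even, the integral in `Δ` may be symmetrised under `q ↦ -q`.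
Coordinatewise, with `a = m p⁽ʲ⁾` and `b = m q⁽ʲ⁾`, the two denominators are
`w(p, ±q) + ζ = 2ε(q) + s ± d + ζ`, where `s = Σ (1 - cos a)(1 + cos b) ≥ 0` and
`d = Σ sin a sin b` satisfies `d² ≤ 2ε(q) s` by Cauchy–Schwarz. This gives
`1/(w(p,q) + ζ) + 1/(w(p,-q) + ζ) ≤ 2/(2ε(q) + ζ)`, hence
`∫ φ²/(w(p,·) + ζ) ≤ ∫ φ²/(2ε + ζ) < ∫ φ²/(2ε) = 1/μ₀`, i.e. `Δ_{μ₀}(p;z) > 0`.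
An eigenfunction for `z < 0` must be `f = μ₀ c φ/(w(p,·) - z)` with `c = ∫ φ f ≠ 0`, and
integrating `φ f` then forces `Δ_{μ₀}(p;z) = 0`. -/

instance : NullSingletonClass (volume : Measure 𝕋) where
  measure_singleton x := by
    simpa [Metric.closedBall_zero] using AddCircle.volume_closedBall (2 * π) (x := x) 0

instance : (volume : Measure T3).IsNegInvariant := Measure.pi.isNegInvariant _

lemma ccos_coe (x : ℝ) : ccos x = cos x := cos_periodic.lift_coe x

lemma ccos_le_one (x : 𝕋) : ccos x ≤ 1 := by
  induction x using QuotientAddGroup.induction_on with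
  | H x => simpa [ccos_coe] using cos_le_one x

lemma ccos_neg (x : 𝕋) : ccos (-x) = ccos x := by
  induction x using QuotientAddGroup.induction_on with
  | H x => rw [← AddCircle.coe_neg, ccos_coe, ccos_coe, cos_neg]

lemma ccos_eq_one_iff {x : 𝕋} : ccos x = 1 ↔ x = 0 := by
  induction x using QuotientAddGroup.induction_on with
  | H x =>
    simp only [ccos_coe, cos_eq_one_iff, AddCircle.coe_eq_zero_iff, zsmul_eq_mul]

@[fun_prop]
lemma continuous_ccos : Continuous ccos := by
  rw [← QuotientAddGroup.isOpenQuotientMap_mk.continuous_comp_iff]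
  exact continuous_cos.congr fun x => (ccos_coe x).symm

lemma eps_coe (m : ℕ) (x : Fin 3 → ℝ) :
    eps m (fun j => (x j : 𝕋)) = ∑ j, (1 - cos (m * x j)) := by
  simp only [eps, ← AddCircle.coe_nsmul, nsmul_eq_mul, ccos_coe]

lemma eps_neg (m : ℕ) (p : T3) : eps m (-p) = eps m p := by
  simp only [eps, Pi.neg_apply, smul_neg, ccos_neg]

lemma eps_nonneg (m : ℕ) (p : T3) : 0 ≤ eps m p :=
  Finset.sum_nonneg fun _ _ => sub_nonneg.2 (ccos_le_one _)

lemma w_nonneg (m : ℕ) (p q : T3) : 0 ≤ w m p q :=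
  add_nonneg (add_nonneg (eps_nonneg m p) (eps_nonneg m _)) (eps_nonneg m q)

@[fun_prop]
lemma continuous_eps (m : ℕ) : Continuous (eps m) := by
  unfold eps; fun_prop

@[fun_prop]
lemma continuous_w (m : ℕ) (p : T3) : Continuous (w m p) := by
  unfold w; fun_prop

lemma nsmul_eq_zero_of_eps_eq_zero {m : ℕ} {p : T3} (h : eps m p = 0) (j : Fin 3) :
    m • p j = 0 :=
  ccos_eq_one_iff.1 (sub_eq_zero.1 <|
    (Finset.sum_eq_zero_iff_of_nonneg fun _ _ => sub_nonneg.2 (ccos_le_one _)).1 h j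
      (Finset.mem_univ j)).symm

lemma ae_eps_ne_zero {m : ℕ} (hm : 0 < m) : ∀ᵐ q : T3, eps m q ≠ 0 := by
  refine measure_mono_null (fun q hq => ?_) <| Measure.pi_eval_preimage_null (i := 0) _
    ((AddCircle.finite_torsion (2 * π) hm).measure_zero volume)
  exact nsmul_eq_zero_of_eps_eq_zero (not_not.1 hq) 0

lemma inv_add_inv_le_of_sq_le {c s d ζ : ℝ} (hc : 0 ≤ c) (hs : 0 ≤ s) (hζ : 0 < ζ)
    (hd : d ^ 2 ≤ 2 * c * s) :
    (2 * c + s + d + ζ)⁻¹ + (2 * c + s - d + ζ)⁻¹ ≤ 2 * (2 * c + ζ)⁻¹ := by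
  have hd' : |d| < 2 * c + s + ζ := abs_lt_of_sq_lt_sq (by nlinarith) (by positivity)
  have h_add : 0 < 2 * c + s + d + ζ := by linarith [neg_abs_le d]
  have h_sub : 0 < 2 * c + s - d + ζ := by linarith [le_abs_self d]
  rw [inv_add_inv h_add.ne' h_sub.ne', ← div_eq_mul_inv,
    div_le_div_iff₀ (by positivity) (by positivity)]
  nlinarith [mul_nonneg hs hζ.le]

lemma inv_add_inv_le_of_sum_one_sub_cos {ι : Type*} [Fintype ι] (x y : ι → ℝ) {ζ : ℝ}
    (hζ : 0 < ζ) :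
    (∑ i, (1 - cos (x i)) + ∑ i, (1 - cos (x i + y i)) + ∑ i, (1 - cos (y i)) + ζ)⁻¹ +
      (∑ i, (1 - cos (x i)) + ∑ i, (1 - cos (x i - y i)) + ∑ i, (1 - cos (y i)) + ζ)⁻¹ ≤
      2 * (2 * ∑ i, (1 - cos (y i)) + ζ)⁻¹ := by
  set c := ∑ i, (1 - cos (y i))
  set s := ∑ i, (1 - cos (x i)) * (1 + cos (y i))
  set d := ∑ i, sin (x i) * sin (y i)
  have h_add : ∑ i, (1 - cos (x i)) + ∑ i, (1 - cos (x i + y i)) + ∑ i, (1 - cos (y i))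
      = 2 * c + s + d := by
    simp only [c, s, d, Finset.mul_sum, ← Finset.sum_add_distrib, cos_add]
    exact Finset.sum_congr rfl fun i _ => by ring
  have h_sub : ∑ i, (1 - cos (x i)) + ∑ i, (1 - cos (x i - y i)) + ∑ i, (1 - cos (y i))
      = 2 * c + s - d := by
    simp only [c, s, d, Finset.mul_sum, ← Finset.sum_add_distrib, ← Finset.sum_sub_distrib,
      cos_sub]
    exact Finset.sum_congr rfl fun i _ => by ring
  have hc : 0 ≤ c := Finset.sum_nonneg fun i _ => by linarith [cos_le_one (y i)]
  have hs : 0 ≤ s := Finset.sum_nonneg fun i _ =>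
    mul_nonneg (by linarith [cos_le_one (x i)]) (by linarith [neg_one_le_cos (y i)])
  -- Cauchy–Schwarz, using `(sin a sin b)² = (1 - cos a)(1 + cos b) · (1 + cos a)(1 - cos b)`
  have hd : d ^ 2 ≤ s * ∑ i, (1 + cos (x i)) * (1 - cos (y i)) :=
    Finset.sum_sq_le_sum_mul_sum_of_sq_le_mul _
      (fun i _ => mul_nonneg (by linarith [cos_le_one (x i)]) (by linarith [neg_one_le_cos (y i)]))
      (fun i _ => mul_nonneg (by linarith [neg_one_le_cos (x i)]) (by linarith [cos_le_one (y i)]))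
      fun i _ => by rw [mul_pow, sin_sq, sin_sq]; nlinarith
  have ht : ∑ i, (1 + cos (x i)) * (1 - cos (y i)) ≤ 2 * c := by
    rw [Finset.mul_sum]
    exact Finset.sum_le_sum fun i _ =>
      mul_le_mul_of_nonneg_right (by linarith [cos_le_one (x i)]) (by linarith [cos_le_one (y i)])
  rw [h_add, h_sub]
  exact inv_add_inv_le_of_sq_le hc hs hζ (by nlinarith)

lemma inv_w_add_inv_w_neg_le (m : ℕ) (p q : T3) {ζ : ℝ} (hζ : 0 < ζ) :
    (w m p q + ζ)⁻¹ + (w m p (-q) + ζ)⁻¹ ≤ 2 * (2 * eps m q + ζ)⁻¹ := by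
  have hlift := Function.Surjective.piMap fun (_ : Fin 3) => QuotientAddGroup.mk_surjective
    (s := AddSubgroup.zmultiples (2 * π))
  obtain ⟨x, rfl⟩ : ∃ x : Fin 3 → ℝ, (fun j => (x j : 𝕋)) = p := hlift p
  obtain ⟨y, rfl⟩ : ∃ y : Fin 3 → ℝ, (fun j => (y j : 𝕋)) = q := hlift q
  have hadd : (fun j => (x j : 𝕋)) + (fun j => (y j : 𝕋)) = fun j => ((x j + y j : ℝ) : 𝕋) :=
    rfl
  have hsub : (fun j => (x j : 𝕋)) + -(fun j => (y j : 𝕋)) = fun j => ((x j - y j : ℝ) : 𝕋) :=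
    funext fun j => by simp [sub_eq_add_neg]
  simp only [w, hadd, hsub, eps_neg, eps_coe, mul_add, mul_sub]
  exact inv_add_inv_le_of_sum_one_sub_cos (fun j => m * x j) (fun j => m * y j) hζ

lemma MeasureTheory.Integrable.mul_continuous {X : Type*} [TopologicalSpace X] [CompactSpace X]
    [MeasurableSpace X] [OpensMeasurableSpace X] {μ : Measure X} {f g : X → ℝ}
    (hf : Integrable f μ) (hg : Continuous g) : Integrable (fun x => f x * g x) μ :=
  hf.mul_of_top_left (hg.memLp_top_of_hasCompactSupport (.of_compactSpace g) μ)

lemma MeasureTheory.Integrable.div_continuous {X : Type*} [TopologicalSpace X] [CompactSpace X]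
    [MeasurableSpace X] [OpensMeasurableSpace X] {μ : Measure X} {f g : X → ℝ}
    (hf : Integrable f μ) (hg : Continuous g) (hg0 : ∀ x, g x ≠ 0) :
    Integrable (fun x => f x / g x) μ := by
  simpa only [div_eq_mul_inv, Pi.inv_apply] using hf.mul_continuous (hg.inv₀ hg0)

lemma integral_lt_integral_of_ae_le_of_ae_lt {α : Type*} [MeasurableSpace α] {μ : Measure α}
    {f g : α → ℝ} (hf : Integrable f μ) (hg : Integrable g μ) (hg0 : 0 ≤ᵐ[μ] g)
    (hfg : f ≤ᵐ[μ] g) (hlt : ∀ᵐ x ∂μ, g x ≠ 0 → f x < g x) (hpos : 0 < ∫ x, g x ∂μ) :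
    ∫ x, f x ∂μ < ∫ x, g x ∂μ := by
  have hsupp : 0 < μ (Function.support g) := (integral_pos_iff_support_of_nonneg_ae hg0 hg).1 hpos
  rw [← sub_pos, ← integral_sub hg hf]
  refine (integral_pos_iff_support_of_nonneg_ae (hfg.mono fun x hx => sub_nonneg.2 hx)
    (hg.sub hf)).2 (hsupp.trans_le (measure_mono_ae ?_))
  filter_upwards [hlt] with x hx hgx
  exact (sub_pos.2 (hx hgx)).ne'

lemma integrable_sq_of_integrable_sq_div_eps {m : ℕ} (hm : 0 < m) {φ : T3 → ℝ}
    (hint : Integrable (fun s => φ s ^ 2 / eps m s)) : Integrable (fun s => φ s ^ 2) :=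
  (hint.mul_continuous (continuous_eps m)).congr <| by
    filter_upwards [ae_eps_ne_zero hm] with s hs using div_mul_cancel₀ _ hs

lemma integral_sq_div_w_add_le (m : ℕ) {φ : T3 → ℝ} (hφe : TorusEven φ)
    (hφ : Integrable (fun q => φ q ^ 2)) (p : T3) {ζ : ℝ} (hζ : 0 < ζ) :
    ∫ q, φ q ^ 2 / (w m p q + ζ) ≤ ∫ q, φ q ^ 2 / (2 * eps m q + ζ) := by
  have hint : ∀ {g : T3 → ℝ}, Continuous g → (∀ q, 0 < g q) →
      Integrable (fun q => φ q ^ 2 / g q) := fun hg hg0 => hφ.div_continuous hg fun q => (hg0 q).ne'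
  have hw := hint (g := fun q => w m p q + ζ) (by fun_prop) fun q => by
    linarith [w_nonneg m p q]
  have hw_neg := hint (g := fun q => w m p (-q) + ζ) (by fun_prop) fun q => by
    linarith [w_nonneg m p (-q)]
  have heps := hint (g := fun q => 2 * eps m q + ζ) (by fun_prop) fun q => by
    linarith [eps_nonneg m q]
  have hrefl : ∫ q, φ q ^ 2 / (w m p (-q) + ζ) = ∫ q, φ q ^ 2 / (w m p q + ζ) := by
    simpa only [show ∀ q, φ (-q) = φ q from hφe] using
      integral_neg_eq_self (fun q => φ q ^ 2 / (w m p q + ζ)) volume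
  have hsum : ∫ q, (φ q ^ 2 / (w m p q + ζ) + φ q ^ 2 / (w m p (-q) + ζ)) ≤
      ∫ q, 2 * (φ q ^ 2 / (2 * eps m q + ζ)) :=
    integral_mono (hw.add hw_neg) (heps.const_mul 2) fun q => by
      simpa only [div_eq_mul_inv, ← mul_add, mul_left_comm _ (2 : ℝ)] using
        mul_le_mul_of_nonneg_left (inv_w_add_inv_w_neg_le m p q hζ) (sq_nonneg (φ q))
  rw [integral_add hw hw_neg, hrefl, integral_const_mul] at hsum
  linarith

lemma integral_sq_div_two_eps_add_lt {m : ℕ} (hm : 0 < m) {φ : T3 → ℝ}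
    (hint : Integrable (fun s => φ s ^ 2 / eps m s)) (hpos : 0 < ∫ s, φ s ^ 2 / eps m s)
    {ζ : ℝ} (hζ : 0 < ζ) :
    ∫ q, φ q ^ 2 / (2 * eps m q + ζ) < (∫ s, φ s ^ 2 / eps m s) / 2 := by
  have hhalf : ∀ q, φ q ^ 2 / (2 * eps m q) = φ q ^ 2 / eps m q / 2 := fun q => by
    rw [div_div, mul_comm]
  rw [← integral_div, ← funext hhalf]
  refine integral_lt_integral_of_ae_le_of_ae_lt
    ((integrable_sq_of_integrable_sq_div_eps hm hint).div_continuous (by fun_prop)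
      fun q => by linarith [eps_nonneg m q])
    (by simpa only [hhalf] using hint.div_const 2)
    (.of_forall fun q => div_nonneg (sq_nonneg _) (mul_nonneg zero_le_two (eps_nonneg m q)))
    ?_ ?_ (by simpa only [hhalf, integral_div] using half_pos hpos)
  · filter_upwards [ae_eps_ne_zero hm] with q hq
    exact div_le_div_of_nonneg_left (sq_nonneg _)
      (mul_pos two_pos ((eps_nonneg m q).lt_of_ne' hq)) (by linarith)
  · filter_upwards [ae_eps_ne_zero hm] with q hq hne
    have hφq : 0 < φ q ^ 2 := (sq_nonneg _).lt_of_ne' fun h => hne (by simp [h])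
    exact div_lt_div_of_pos_left hφq (mul_pos two_pos ((eps_nonneg m q).lt_of_ne' hq))
      (by linarith)

lemma delta_pos {m : ℕ} (hm : 0 < m) {φ : T3 → ℝ} (hφe : TorusEven φ)
    (hint : Integrable (fun s => φ s ^ 2 / eps m s)) (hpos : 0 < ∫ s, φ s ^ 2 / eps m s)
    (p : T3) {z : ℝ} (hz : z < 0) :
    0 < Delta m φ (2 * (∫ s, φ s ^ 2 / eps m s)⁻¹) p z := by
  set I := ∫ s, φ s ^ 2 / eps m s
  have hlt : ∫ q, φ q ^ 2 / (w m p q - z) < I / 2 := by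
    simp only [sub_eq_add_neg]
    exact (integral_sq_div_w_add_le m hφe (integrable_sq_of_integrable_sq_div_eps hm hint) p
      (neg_pos.2 hz)).trans_lt (integral_sq_div_two_eps_add_lt hm hint hpos (neg_pos.2 hz))
  have hone : 2 * I⁻¹ * (I / 2) = 1 := by field_simp
  rw [Delta, sub_pos, ← hone]
  exact mul_lt_mul_of_pos_left hlt (by positivity)

lemma delta_eq_zero_of_eigenfunction {m : ℕ} {φ : T3 → ℝ} {μ : ℝ} {p : T3} {z : ℝ} (hz : z < 0)
    {f : T3 → ℝ} (hf : ¬ f =ᵐ[volume] 0)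
    (heq : ∀ᵐ q, w m p q * f q - μ * φ q * (∫ s, φ s * f s) = z * f q) :
    Delta m φ μ p z = 0 := by
  set c := ∫ s, φ s * f s
  have hden : ∀ q, w m p q - z ≠ 0 := fun q => by linarith [w_nonneg m p q]
  have hf_eq : f =ᵐ[volume] fun q => μ * c * (φ q / (w m p q - z)) := heq.mono fun q hq => by
    field_simp [hden q]
    linear_combination hq
  have hc : c ≠ 0 := fun hc => hf <| hf_eq.trans (.of_forall fun q => by simp [hc])
  have hc_eq : c = μ * c * ∫ q, φ q ^ 2 / (w m p q - z) := calc
    c = ∫ q, μ * c * (φ q ^ 2 / (w m p q - z)) :=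
      integral_congr_ae (hf_eq.mono fun q hq => by dsimp only at hq ⊢; rw [hq]; ring)
    _ = μ * c * ∫ q, φ q ^ 2 / (w m p q - z) := integral_const_mul _ _
  exact (mul_eq_zero.1 (by rw [Delta]; linear_combination hc_eq)).resolve_left hc

theorem no_negative_eigenvalues_general (m : ℕ) (hm : 3 ≤ m)
    (φ : T3 → ℝ) (hφe : TorusEven φ)
    (hint : Integrable (fun s : T3 => φ s ^ 2 / eps m s) volume)
    (hpos : 0 < ∫ s : T3, φ s ^ 2 / eps m s)
    (μ₀ : ℝ) (hμ₀ : μ₀ = 2 * (∫ s : T3, φ s ^ 2 / eps m s)⁻¹) :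
    (∀ p : T3, ∀ z : ℝ, z < 0 → 0 < Delta m φ μ₀ p z) ∧
    (∀ p : T3, ¬ ∃ z : ℝ, z < 0 ∧ ∃ f : Lp ℝ 2 (volume : Measure T3), f ≠ 0 ∧
      ∀ᵐ q : T3, w m p q * f q - μ₀ * φ q * (∫ s : T3, φ s * f s) = z * f q) := by
  have hΔ : ∀ p z, z < 0 → 0 < Delta m φ μ₀ p z := fun p z hz =>
    hμ₀ ▸ delta_pos (by omega) hφe hint hpos p hz
  refine ⟨hΔ, fun p ⟨z, hz, f, hf0, hf⟩ => (hΔ p z hz).ne' ?_⟩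
  exact delta_eq_zero_of_eigenfunction hz (mt Lp.eq_zero_iff_ae_eq_zero.2 hf0) hf

/-- `Δ_{μ₀}(p;z) > 0` for every `p` and every `z < 0`; consequently the Friedrichs model
`h_{μ₀}(p)` has no negative eigenvalue: there is no `z < 0` and nonzero `f ∈ L²(𝕋³)`
with `h_{μ₀}(p)f = z·f`. -/
theorem no_negative_eigenvalues (m : ℕ) (hm : 3 ≤ m)
    (φ : T3 → ℝ) (hφa : TorusAnalytic φ) (hφe : TorusEven φ) (hφ0 : φ ≠ 0)
    (hint : Integrable (fun s : T3 => φ s ^ 2 / eps m s) volume)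
    (hpos : 0 < ∫ s : T3, φ s ^ 2 / eps m s)
    (μ₀ : ℝ) (hμ₀ : μ₀ = 2 * (∫ s : T3, φ s ^ 2 / eps m s)⁻¹) :
    (∀ p : T3, ∀ z : ℝ, z < 0 → 0 < Delta m φ μ₀ p z) ∧
    (∀ p : T3, ¬ ∃ z : ℝ, z < 0 ∧ ∃ f : Lp ℝ 2 (volume : Measure T3), f ≠ 0 ∧
      ∀ᵐ q : T3, w m p q * f q - μ₀ * φ q * (∫ s : T3, φ s * f s) = z * f q) :=
  no_negative_eigenvalues_general m hm φ hφe hint hpos μ₀ hμ₀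

end
end
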